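/- Let T be a complex symmetric n×n matrix whose imaginary part Im T (the real matrix of imaginary parts of the entries of T) is positive definite, let ħ > 0, and let ξ ∈ ℝⁿ. Then the function x ↦ exp(i⟨T x, x⟩/(2ħ)) is Lebesgue integrable on ℝⁿ, T is invertible, and the quantity I(ξ) = (2πħ)^{−n/2} ∫_{ℝⁿ} exp(i⟨x, ξ⟩/ħ) · exp(i⟨T x, x⟩/(2ħ)) dx satisfies I(ξ)² = det(−iT)^{−1} · exp(−i⟨T^{−1} ξ, ξ⟩/ħ). In particular the Fourier transform of the Gaussian exp(i⟨T x, x⟩/(2ħ)) is, up to the normalization (det(−iT))^{−1/2} determined by a branch of the square root, the Gaussian exp(−i⟨T^{−1} ξ, ξ⟩/(2ħ)). -/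

import Mathlib

open Real Matrix MeasureTheory

/-!
Since `Im T` is positive definite and `Re T` is symmetric, a single real invertible `P`
brings both to diagonal form, `Pᵀ T P = diag(w)` with `Im wⱼ > 0`. The substitution `x = P y`
turns the integral into a product of one-dimensional complex Gaussian integrals, each given by
`∫ exp(-b y² + c y) dy = (π/b)^{1/2} exp(c²/4b)`. Squaring removes the branch of the square
root, and `det P` and `Pᵀ ξ` recombine into `det(-iT)` and `⟨T⁻¹ξ, ξ⟩`.
-/

/-- The bilinear pairing `⟨T x, x⟩ = Σ_{j,k} T_{jk} x_k x_j` of a complex matrix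
with a real vector. -/
noncomputable def cQuad {n : ℕ} (T : Matrix (Fin n) (Fin n) ℂ) (x : Fin n → ℝ) : ℂ :=
  (T.mulVec fun i => (x i : ℂ)) ⬝ᵥ (fun i => (x i : ℂ))

theorem Real.rpow_neg_div_two_sq {x : ℝ} (hx : 0 ≤ x) (n : ℕ) :
    (x ^ (-(n : ℝ) / 2)) ^ 2 = (x ^ n)⁻¹ := by
  rw [← Real.rpow_natCast, ← Real.rpow_mul hx, show -(n : ℝ) / 2 * (2 : ℕ) = -n by push_cast; ring,
    Real.rpow_neg hx, Real.rpow_natCast]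

namespace Matrix

variable {ι : Type*} [Fintype ι]

theorem transpose_mul_mul_mulVec_dotProduct {R : Type*} [CommSemiring R]
    (Q P : Matrix ι ι R) (v : ι → R) :
    ((Pᵀ * Q * P) *ᵥ v) ⬝ᵥ v = (Q *ᵥ (P *ᵥ v)) ⬝ᵥ (P *ᵥ v) := by
  rw [← mulVec_mulVec, ← mulVec_mulVec, dotProduct_comm, dotProduct_mulVec, vecMul_transpose,
    dotProduct_comm]

theorem map_ofReal_mulVec (P : Matrix ι ι ℝ) (y : ι → ℝ) :
    P.map Complex.ofRealHom *ᵥ (fun i => (y i : ℂ)) = fun i => ((P *ᵥ y) i : ℂ) :=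
  funext fun i => (RingHom.map_mulVec Complex.ofRealHom P y i).symm

variable [DecidableEq ι]

theorem diagonal_mulVec_dotProduct_self {R : Type*} [CommSemiring R] (w v : ι → R) :
    (diagonal w *ᵥ v) ⬝ᵥ v = ∑ j, w j * v j ^ 2 := by
  simp only [dotProduct, mulVec_diagonal, sq, mul_assoc]

open scoped MatrixOrder in
theorem PosDef.exists_transpose_mul_mul_eq_one_and_diagonal {A B : Matrix ι ι ℝ}
    (hA : A.IsSymm) (hB : B.PosDef) :
    ∃ (P : Matrix ι ι ℝ) (d : ι → ℝ),
      IsUnit P.det ∧ Pᵀ * B * P = 1 ∧ Pᵀ * A * P = diagonal d := by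
  -- With `B = SᵀS`, take `P = S⁻¹ U` for an orthogonal `U` diagonalising `S⁻ᵀ A S⁻¹`.
  obtain ⟨S, rfl⟩ := CStarAlgebra.nonneg_iff_eq_star_mul_self.mp hB.posSemidef.nonneg
  rw [star_eq_conjTranspose, conjTranspose_eq_transpose_of_trivial] at hB ⊢
  have hS : IsUnit S.det := by
    have := hB.det_pos
    rw [det_mul, det_transpose] at this
    exact isUnit_iff_ne_zero.mpr (mul_self_pos.mp this)
  have hM : (S⁻¹ᵀ * A * S⁻¹).IsHermitian := by
    rw [IsHermitian, conjTranspose_eq_transpose_of_trivial]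
    simp only [transpose_mul, transpose_transpose, hA.eq, mul_assoc]
  set U : Matrix ι ι ℝ := ↑hM.eigenvectorUnitary
  have hUt : Uᵀ = star U := by rw [star_eq_conjTranspose, conjTranspose_eq_transpose_of_trivial]
  refine ⟨S⁻¹ * U, hM.eigenvalues, ?_, ?_, ?_⟩
  · rw [det_mul]
    exact (isUnit_nonsing_inv_det S hS).mul (UnitaryGroup.det_isUnit hM.eigenvectorUnitary)
  · calc (S⁻¹ * U)ᵀ * (Sᵀ * S) * (S⁻¹ * U) = star U * ((S * S⁻¹)ᵀ * (S * S⁻¹)) * U := by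
          simp only [transpose_mul, hUt, mul_assoc]
      _ = 1 := by simp [mul_nonsing_inv S hS, U]
  · calc (S⁻¹ * U)ᵀ * A * (S⁻¹ * U) = star U * (S⁻¹ᵀ * A * S⁻¹) * U := by
          simp only [transpose_mul, hUt, mul_assoc]
      _ = diagonal hM.eigenvalues := by
          simpa using hM.conjStarAlgAut_star_eigenvectorUnitary

theorem exists_transpose_mul_mul_eq_diagonal_of_posDef_im {T : Matrix ι ι ℂ}
    (hT : T.IsSymm) (him : (T.map Complex.im).PosDef) :
    ∃ (P : Matrix ι ι ℝ) (w : ι → ℂ), IsUnit P.det ∧ (∀ j, 0 < (w j).im) ∧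
      (P.map Complex.ofRealHom)ᵀ * T * P.map Complex.ofRealHom = diagonal w := by
  have hre : (T.map Complex.re).IsSymm := by rw [IsSymm, ← transpose_map, hT.eq]
  obtain ⟨P, d, hP, him1, hre1⟩ := him.exists_transpose_mul_mul_eq_one_and_diagonal hre
  refine ⟨P, fun j => d j + Complex.I, hP, fun j => by simp, ?_⟩
  have hsplit : T = (T.map Complex.re).map Complex.ofRealHom +
      Complex.I • (T.map Complex.im).map Complex.ofRealHom := by
    ext i j
    simp [mul_comm Complex.I, Complex.re_add_im]
  rw [hsplit, mul_add, add_mul, Matrix.mul_smul, Matrix.smul_mul, ← transpose_map,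
    ← Matrix.map_mul, ← Matrix.map_mul, ← Matrix.map_mul, ← Matrix.map_mul, hre1, him1]
  ext i j
  rcases eq_or_ne i j with rfl | h <;> simp [diagonal, *]

variable {K : Type*} [Field K] {T P : Matrix ι ι K} {w : ι → K}

theorem det_mul_det_sq_of_transpose_mul_mul_eq_diagonal (h : Pᵀ * T * P = diagonal w) :
    T.det * P.det ^ 2 = ∏ j, w j := by
  rw [← det_diagonal, ← h, det_mul, det_mul, det_transpose]
  ring

theorem isUnit_det_of_transpose_mul_mul_eq_diagonal (hw : ∀ j, w j ≠ 0)
    (h : Pᵀ * T * P = diagonal w) : IsUnit T.det :=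
  isUnit_iff_ne_zero.mpr <| left_ne_zero_of_mul <|
    det_mul_det_sq_of_transpose_mul_mul_eq_diagonal h ▸ Finset.prod_ne_zero_iff.mpr fun j _ => hw j

theorem inv_det_eq_of_transpose_mul_mul_eq_diagonal (hP : P.det ≠ 0)
    (h : Pᵀ * T * P = diagonal w) : T.det⁻¹ = P.det ^ 2 / ∏ j, w j := by
  rw [← det_mul_det_sq_of_transpose_mul_mul_eq_diagonal h, div_mul_cancel_right₀ (pow_ne_zero 2 hP)]

theorem inv_eq_of_transpose_mul_mul_eq_diagonal (hP : IsUnit P.det) (hw : ∀ j, w j ≠ 0)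
    (h : Pᵀ * T * P = diagonal w) : T⁻¹ = P * diagonal w⁻¹ * Pᵀ := by
  refine inv_eq_left_inv ?_
  calc P * diagonal w⁻¹ * Pᵀ * T = P * (diagonal w⁻¹ * (Pᵀ * T * P)) * P⁻¹ := by
        simp only [mul_assoc, mul_nonsing_inv P hP, mul_one]
    _ = 1 := by
        rw [h, diagonal_mul_diagonal]
        simp [inv_mul_cancel₀ (hw _), mul_nonsing_inv P hP]

theorem inv_mulVec_dotProduct_of_transpose_mul_mul_eq_diagonal (hP : IsUnit P.det)
    (hw : ∀ j, w j ≠ 0) (h : Pᵀ * T * P = diagonal w) (v : ι → K) :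
    (T⁻¹ *ᵥ v) ⬝ᵥ v = ∑ j, (w j)⁻¹ * (Pᵀ *ᵥ v) j ^ 2 := by
  rw [inv_eq_of_transpose_mul_mul_eq_diagonal hP hw h]
  nth_rewrite 1 [← transpose_transpose P]
  rw [transpose_mul_mul_mulVec_dotProduct, diagonal_mulVec_dotProduct_self]
  rfl

end Matrix

section ChangeOfVariables

variable {ι : Type*} [Fintype ι] [DecidableEq ι] {E : Type*} [NormedAddCommGroup E]
  {P : Matrix ι ι ℝ}

theorem Matrix.measurableEmbedding_mulVec (hP : P.det ≠ 0) :
    MeasurableEmbedding (P *ᵥ · : (ι → ℝ) → ι → ℝ) :=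
  ((toLin' P).equivOfDetNeZero (by rwa [LinearMap.det_toLin'])).toContinuousLinearEquiv
    |>.toHomeomorph.measurableEmbedding

theorem Matrix.map_mulVec_volume (hP : P.det ≠ 0) :
    Measure.map (P *ᵥ ·) (volume : Measure (ι → ℝ)) = ENNReal.ofReal |P.det⁻¹| • volume :=
  Real.map_matrix_volume_pi_eq_smul_volume_pi hP

theorem integral_comp_mulVec [NormedSpace ℝ E] (hP : P.det ≠ 0) (f : (ι → ℝ) → E) :
    ∫ y, f (P *ᵥ y) = |P.det|⁻¹ • ∫ x, f x := by
  rw [← (measurableEmbedding_mulVec hP).integral_map, map_mulVec_volume hP,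
    integral_smul_measure, ENNReal.toReal_ofReal (abs_nonneg _), abs_inv]

theorem integrable_comp_mulVec_iff (hP : P.det ≠ 0) {f : (ι → ℝ) → E} :
    Integrable (fun y => f (P *ᵥ y)) ↔ Integrable f := by
  rw [← Function.comp_def, ← (measurableEmbedding_mulVec hP).integrable_map_iff,
    map_mulVec_volume hP, integrable_smul_measure (by simpa using hP) ENNReal.ofReal_ne_top]

end ChangeOfVariables

section Gaussian

open Complex

theorem Complex.re_neg_I_mul_div_pos {w : ℂ} (hw : 0 < w.im) {ħ : ℝ} (hħ : 0 < ħ) :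
    0 < (-I * w / (2 * ħ)).re := by
  simp [Complex.div_re, hw, hħ]

variable {ι : Type*} [Fintype ι] {w : ι → ℂ} {ħ : ℝ}

theorem integrable_cexp_I_mul_sum_mul_sq (hw : ∀ j, 0 < (w j).im) (hħ : 0 < ħ) :
    Integrable (fun y : ι → ℝ => cexp (I * (∑ j, w j * (y j : ℂ) ^ 2) / (2 * ħ))) := by
  have hb : ∀ j, 0 < (-I * w j / (2 * ħ)).re := fun j => re_neg_I_mul_div_pos (hw j) hħ
  convert GaussianFourier.integrable_cexp_neg_sum_mul_add hb 0 using 3 with y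
  simp only [Pi.zero_apply, zero_mul, Finset.sum_const_zero, add_zero, Finset.mul_sum,
    Finset.sum_div, ← Finset.sum_neg_distrib]
  refine Finset.sum_congr rfl fun j _ => ?_
  ring

theorem sq_integral_cexp_dotProduct_mul_cexp_sum_mul_sq (hw : ∀ j, 0 < (w j).im) (hħ : 0 < ħ)
    (η : ι → ℝ) :
    (∫ y : ι → ℝ, cexp (I * ((y ⬝ᵥ η : ℝ) : ℂ) / ħ) *
        cexp (I * (∑ j, w j * (y j : ℂ) ^ 2) / (2 * ħ))) ^ 2 =
      ∏ j, 2 * π * ħ / (-I * w j) * cexp (-I * (η j : ℂ) ^ 2 / (w j * ħ)) := by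
  have hb : ∀ j, 0 < (-I * w j / (2 * ħ)).re := fun j => re_neg_I_mul_div_pos (hw j) hħ
  have hw0 : ∀ j, w j ≠ 0 := fun j h => by simpa [h] using hw j
  have hħ0 : (ħ : ℂ) ≠ 0 := ofReal_ne_zero.mpr hħ.ne'
  have hintegrand : ∀ y : ι → ℝ, cexp (I * ((y ⬝ᵥ η : ℝ) : ℂ) / ħ) *
      cexp (I * (∑ j, w j * (y j : ℂ) ^ 2) / (2 * ħ)) =
      cexp (-∑ j, -I * w j / (2 * ħ) * (y j : ℂ) ^ 2 + ∑ j, I * η j / ħ * y j) := by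
    intro y
    rw [← Complex.exp_add, add_comm]
    simp only [dotProduct, ofReal_sum, ofReal_mul, Finset.mul_sum, Finset.sum_div,
      ← Finset.sum_neg_distrib]
    congr 2 <;> refine Finset.sum_congr rfl fun j _ => ?_ <;> ring
  simp_rw [hintegrand, GaussianFourier.integral_cexp_neg_sum_mul_add hb, ← Finset.prod_pow]
  refine Finset.prod_congr rfl fun j _ => ?_
  rw [mul_pow, one_div, cpow_ofNat_inv_pow, sq, ← Complex.exp_add]
  congr 1
  · rw [div_div_eq_mul_div]
    ring
  · congr 1
    field_simp
    ring

end Gaussian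

section cQuad

open Complex

variable {n : ℕ}

theorem cQuad_mulVec (T : Matrix (Fin n) (Fin n) ℂ) (P : Matrix (Fin n) (Fin n) ℝ)
    (y : Fin n → ℝ) :
    cQuad T (P *ᵥ y) = cQuad ((P.map ofRealHom)ᵀ * T * P.map ofRealHom) y := by
  rw [cQuad, cQuad, transpose_mul_mul_mulVec_dotProduct, map_ofReal_mulVec]

theorem cQuad_diagonal (w : Fin n → ℂ) (y : Fin n → ℝ) :
    cQuad (diagonal w) y = ∑ j, w j * (y j : ℂ) ^ 2 :=
  diagonal_mulVec_dotProduct_self _ _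

theorem integral_cexp_dotProduct_mul_cexp_cQuad_eq {P : Matrix (Fin n) (Fin n) ℝ}
    (hP : P.det ≠ 0) (T : Matrix (Fin n) (Fin n) ℂ) (ħ : ℝ) (ξ : Fin n → ℝ) :
    ∫ x, cexp (I * ((x ⬝ᵥ ξ : ℝ) : ℂ) / ħ) * cexp (I * cQuad T x / (2 * ħ)) =
      |P.det| • ∫ y, cexp (I * ((y ⬝ᵥ Pᵀ *ᵥ ξ : ℝ) : ℂ) / ħ) *
        cexp (I * cQuad ((P.map ofRealHom)ᵀ * T * P.map ofRealHom) y / (2 * ħ)) := by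
  have hdot : ∀ y, (P *ᵥ y) ⬝ᵥ ξ = y ⬝ᵥ Pᵀ *ᵥ ξ := fun y => by
    rw [dotProduct_comm, dotProduct_mulVec, ← mulVec_transpose, dotProduct_comm]
  rw [← one_smul ℝ (∫ x, _), ← mul_inv_cancel₀ (abs_ne_zero.mpr hP), mul_smul,
    ← integral_comp_mulVec hP]
  simp_rw [cQuad_mulVec, hdot]

end cQuad

/-- Gaussian Fourier transform: for a complex symmetric `T` with positive
definite imaginary part, `x ↦ exp(i⟨Tx,x⟩/(2hb))` is integrable, `T` is
invertible, and the normalized Fourier transform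
`I(ξ) = (2π hb)^{−n/2} ∫ exp(i⟨x,ξ⟩/hb) exp(i⟨Tx,x⟩/(2hb)) dx` satisfies
`I(ξ)² = det(−iT)⁻¹ · exp(−i⟨T⁻¹ξ,ξ⟩/hb)`. -/
theorem stmt_8 (n : ℕ) (T : Matrix (Fin n) (Fin n) ℂ) (hsymm : Tᵀ = T)
    (him : (Matrix.of fun i j => (T i j).im).PosDef) (hb : ℝ) (hhb : 0 < hb)
    (ξ : Fin n → ℝ) :
    Integrable (fun x : Fin n → ℝ => Complex.exp (Complex.I * cQuad T x / (2 * hb)))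
      volume ∧
    IsUnit T.det ∧
    ((((2 * π * hb) ^ (-(n : ℝ) / 2) : ℝ) : ℂ) *
        ∫ x : Fin n → ℝ,
          Complex.exp (Complex.I * ((x ⬝ᵥ ξ : ℝ) : ℂ) / hb) *
            Complex.exp (Complex.I * cQuad T x / (2 * hb))) ^ 2 =
      ((-Complex.I) • T).det⁻¹ *
        Complex.exp (-Complex.I * ((T⁻¹.mulVec fun i => ((ξ i : ℂ))) ⬝ᵥ
          (fun i => ((ξ i : ℂ)))) / hb) := by
  obtain ⟨P, w, hP, hw, hPTP⟩ := exists_transpose_mul_mul_eq_diagonal_of_posDef_im hsymm him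
  have hw0 : ∀ j, w j ≠ 0 := fun j h => by simpa [h] using hw j
  have hPc : (P.map Complex.ofRealHom).det = P.det := (RingHom.map_det Complex.ofRealHom P).symm
  refine ⟨?_, isUnit_det_of_transpose_mul_mul_eq_diagonal hw0 hPTP, ?_⟩
  · rw [← integrable_comp_mulVec_iff hP.ne_zero]
    simp_rw [cQuad_mulVec, hPTP, cQuad_diagonal]
    exact integrable_cexp_I_mul_sum_mul_sq hw hhb
  have hdet : ((-Complex.I) • T).det⁻¹ = P.det ^ 2 / ∏ j, (-Complex.I * w j) := by
    rw [inv_det_eq_of_transpose_mul_mul_eq_diagonal (hPc ▸ Complex.ofReal_ne_zero.mpr hP.ne_zero)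
      (by rw [Matrix.mul_smul, Matrix.smul_mul, hPTP, ← diagonal_smul]), hPc]
    rfl
  rw [integral_cexp_dotProduct_mul_cexp_cQuad_eq hP.ne_zero, hPTP, hdet,
    inv_mulVec_dotProduct_of_transpose_mul_mul_eq_diagonal (hPc ▸ hP.map Complex.ofRealHom)
      hw0 hPTP, ← transpose_map, map_ofReal_mulVec]
  simp_rw [cQuad_diagonal]
  rw [Complex.real_smul, mul_pow, mul_pow, sq_integral_cexp_dotProduct_mul_cexp_sum_mul_sq hw hhb,
    ← Complex.ofReal_pow, ← Complex.ofReal_pow, Real.rpow_neg_div_two_sq (by positivity), sq_abs,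
    Finset.prod_mul_distrib, Finset.prod_div_distrib, Finset.prod_const, Finset.card_univ,
    Fintype.card_fin, ← Complex.exp_sum, Finset.mul_sum, Finset.sum_div]
  have h2πħ : (2 * π * hb : ℂ) ≠ 0 := by exact_mod_cast (by positivity : 2 * π * hb ≠ 0)
  push_cast
  field_simp
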